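/- With X an elliptic curve over 𝔽_q, Q an 𝔽_q-rational point with uniformizer π_Q, the set of pairs (f₂, f₁) of rational functions regular on X∖{Q} satisfying ord_Q(f₁) ≥ −1 and ord_Q(f₂ + π_Q⁻¹f₁) ≥ −1 consists exactly of pairs of constants: f₁, f₂ ∈ 𝔽_q. -/
import Mathlib


/-- A model of a smooth projective genus-one curve `X` over a field `k` (e.g. `𝔽_q`):
function field `F`, closed points with degrees, `WithTop ℤ`-valued orders of vanishing
(`ordv P 0 = ⊤`), together with the basic valuation axioms and the genus-one facts
that the divisor of a nonzero function has degree zero and that a function with at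
worst a simple pole at a single rational point and no other poles is a constant
would follow; here we record the raw curve data. -/
structure GenusOneCurveModel (k : Type) [Field k] where
  F : Type
  [fieldF : Field F]
  [algebraF : Algebra k F]
  Point : Type
  deg : Point → ℕ
  ordv : Point → F → WithTop ℤ
  ordv_zero : ∀ P, ordv P 0 = ⊤
  ordv_add : ∀ P (f g : F), min (ordv P f) (ordv P g) ≤ ordv P (f + g)
  ordv_mul : ∀ P (f g : F), f ≠ 0 → g ≠ 0 → ordv P (f * g) = ordv P f + ordv P g
  ordv_algebraMap : ∀ P (c : k), c ≠ 0 → ordv P (algebraMap k F c) = 0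
  /-- Genus one: there is no rational function on `X` with a single simple pole at a
  rational point; equivalently every element of `L(P)` is constant. -/
  genus_one : ∀ (P : Point) (f : F), deg P = 1 →
    (∀ x, x ≠ P → 0 ≤ ordv x f) → (-1 : WithTop ℤ) ≤ ordv P f →
    ∃ c : k, f = algebraMap k F c

attribute [instance] GenusOneCurveModel.fieldF GenusOneCurveModel.algebraF

lemma negOneCoe : (-1 : WithTop ℤ) = ((-1 : ℤ) : WithTop ℤ) := by push_cast; ring

lemma topNeNegOne : (⊤ : WithTop ℤ) ≠ -1 := by
  rw [negOneCoe]; exact fun h => WithTop.coe_ne_top h.symm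

/-- **Sections of `I₂(Q)` are constants.**  On an elliptic curve `X` over `𝔽_q` with
`𝔽_q`-rational point `Q` and uniformizer `π_Q` at `Q`, every pair `(f₂, f₁)` of
rational functions regular on `X ∖ {Q}` with `ord_Q(f₁) ≥ -1` and
`ord_Q(f₂ + π_Q⁻¹ f₁) ≥ -1` is a pair of constants: `f₁, f₂ ∈ 𝔽_q`. -/
theorem sections_I2_of_Q_are_constants
    (k : Type) [Field k] [Fintype k] (X : GenusOneCurveModel k)
    (Q : X.Point) (hQ : X.deg Q = 1)
    (π : X.F) (hπ : X.ordv Q π = 1)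
    (f₁ f₂ : X.F)
    (h₁reg : ∀ x, x ≠ Q → 0 ≤ X.ordv x f₁)
    (h₂reg : ∀ x, x ≠ Q → 0 ≤ X.ordv x f₂)
    (h₁Q : (-1 : WithTop ℤ) ≤ X.ordv Q f₁)
    (h₂Q : (-1 : WithTop ℤ) ≤ X.ordv Q (f₂ + π⁻¹ * f₁)) :
    (∃ c₁ : k, f₁ = algebraMap k X.F c₁) ∧ (∃ c₂ : k, f₂ = algebraMap k X.F c₂) := by
  have hπne : π ≠ 0 := by
    intro h
    rw [h, X.ordv_zero] at hπ
    exact (by simp : (⊤ : WithTop ℤ) ≠ 1) hπ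
  have hone : X.ordv Q 1 = 0 := by
    have := X.ordv_algebraMap Q 1 one_ne_zero
    rwa [map_one] at this
  have hinv : X.ordv Q π⁻¹ = -1 := by
    have h := X.ordv_mul Q π π⁻¹ hπne (inv_ne_zero hπne)
    rw [mul_inv_cancel₀ hπne, hone, hπ] at h
    have hne' : X.ordv Q π⁻¹ ≠ ⊤ := by
      intro ht; rw [ht, add_top] at h; exact WithTop.zero_ne_top h
    lift X.ordv Q π⁻¹ to ℤ using hne' with n hn
    have h' : (0 : ℤ) = 1 + n := by exact_mod_cast h
    have hn' : n = -1 := by omega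
    rw [hn', negOneCoe]
  obtain ⟨c₁, hc₁⟩ := X.genus_one Q f₁ hQ h₁reg h₁Q
  refine ⟨⟨c₁, hc₁⟩, ?_⟩
  -- order at Q of π⁻¹ * f₁ is ≥ -1
  have hterm : (-1 : WithTop ℤ) ≤ X.ordv Q (-(π⁻¹ * f₁)) := by
    rcases eq_or_ne f₁ 0 with h0 | h0
    · rw [h0, mul_zero, neg_zero, X.ordv_zero]; exact le_top
    · have hc₁ne : c₁ ≠ 0 := by
        intro h; rw [h, map_zero] at hc₁; exact h0 hc₁
      have hf₁ : X.ordv Q f₁ = 0 := by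
        rw [hc₁]; exact X.ordv_algebraMap Q c₁ hc₁ne
      have hmul : X.ordv Q (π⁻¹ * f₁) = -1 := by
        rw [X.ordv_mul Q π⁻¹ f₁ (inv_ne_zero hπne) h0, hinv, hf₁, add_zero]
      have hnegone : ((algebraMap k X.F) (-1)) = (-1 : X.F) := by
        rw [map_neg, map_one]
      have : X.ordv Q (-(π⁻¹ * f₁)) = -1 := by
        have hne : (-1 : X.F) ≠ 0 := neg_ne_zero.mpr one_ne_zero
        have := X.ordv_mul Q (-1) (π⁻¹ * f₁) hne (by
          intro h; rw [h, X.ordv_zero] at hmul; exact topNeNegOne hmul)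
        rw [neg_one_mul] at this
        rw [this, ← hnegone, X.ordv_algebraMap Q (-1) (neg_ne_zero.mpr one_ne_zero),
          hmul, zero_add]
      rw [this]
  have h₂Q' : (-1 : WithTop ℤ) ≤ X.ordv Q f₂ := by
    have key := X.ordv_add Q (f₂ + π⁻¹ * f₁) (-(π⁻¹ * f₁))
    rw [add_neg_cancel_right] at key
    exact le_trans (le_min h₂Q hterm) key
  exact X.genus_one Q f₂ hQ h₂reg h₂Q'
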